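/- Let X, Y ∈ M_n(ℂ) with unit-modulus z, w such that W(zX) ⊂ S_{α₁} and W(wY) ⊂ S_{α₂}. Then ω(X ∘ Y) ≤ sec(α₁) sec(α₂) ω(X) ω(Y), where ∘ is the Hadamard product. -/

import Mathlib

open Matrix Complex
open scoped ComplexOrder

/-- Hermitian real part `(X + Xᴴ)/2`. -/
noncomputable def reM {m : ℕ} (X : Matrix (Fin m) (Fin m) ℂ) : Matrix (Fin m) (Fin m) ℂ :=
  (1 / 2 : ℂ) • (X + Xᴴ)

/-- Hermitian imaginary part `(X - Xᴴ)/(2i)`. -/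
noncomputable def imM {m : ℕ} (X : Matrix (Fin m) (Fin m) ℂ) : Matrix (Fin m) (Fin m) ℂ :=
  (-Complex.I / 2) • (X - Xᴴ)

/-- Numerical range `W(X) = {⟨Xx, x⟩ : ‖x‖ = 1}`. -/
noncomputable def numRange {m : ℕ} (X : Matrix (Fin m) (Fin m) ℂ) : Set ℂ :=
  {z | ∃ x : EuclideanSpace ℂ (Fin m), ‖x‖ = 1 ∧ z = star (x : Fin m → ℂ) ⬝ᵥ X.mulVec x}

/-- Numerical radius `ω(X) = sup {|z| : z ∈ W(X)}`. -/
noncomputable def numRadius {m : ℕ} (X : Matrix (Fin m) (Fin m) ℂ) : ℝ :=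
  sSup ((fun z : ℂ => ‖z‖) '' numRange X)

/-- The sector `S_α`. -/
def sector (α : ℝ) : Set ℂ := {z : ℂ | 0 < z.re ∧ |z.im| ≤ Real.tan α * z.re}

/-- Operator norm of a matrix acting on Euclidean space. -/
noncomputable def opNorm {m : ℕ} (X : Matrix (Fin m) (Fin m) ℂ) : ℝ :=
  ‖Matrix.toEuclideanCLM (𝕜 := ℂ) X‖


/-!
Put `A = zX`, `B = wY`. If `W(A) ⊆ S_α`, both rotations `e^{± i(π/2 - α)} A` still have positive
semidefinite Hermitian part, and `A` is a unimodular combination of these two Hermitian parts;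
this gives `2 cos α |⟨Ay, x⟩| ≤ Re⟨Ax, x⟩ + Re⟨Ay, y⟩`, i.e. the block matrix
`[[sec α · Re A, A], [A*, sec α · Re A]]` is positive semidefinite. By the Schur product theorem
so is the entrywise product of the blocks for `A` and `B`, whence
`ω(A ∘ B) ≤ sec α₁ sec α₂ · ω(Re A ∘ Re B)`. For positive semidefinite `P`, `Q`, Schur applied to
`ω(P) I - P ⪰ 0` gives `ω(P ∘ Q) ≤ ω(P) ω(Q)`; and `ω(Re A) ≤ ω(A) = ω(X)`.
-/

open ComplexConjugate
open scoped Pointwise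

namespace Matrix

variable {m : Type*}

lemma fromBlocks_hadamard_fromBlocks {α l : Type*} [Mul α] (A A' : Matrix l l α)
    (B B' : Matrix l m α) (C C' : Matrix m l α) (D D' : Matrix m m α) :
    fromBlocks A B C D ⊙ fromBlocks A' B' C' D' =
      fromBlocks (A ⊙ A') (B ⊙ B') (C ⊙ C') (D ⊙ D') := by
  ext (i | i) (j | j) <;> rfl

theorem PosSemidef.fromBlocks_hadamard {H₁ M₁ H₂ M₂ : Matrix m m ℂ}
    (h₁ : (fromBlocks H₁ M₁ M₁ᴴ H₁).PosSemidef) (h₂ : (fromBlocks H₂ M₂ M₂ᴴ H₂).PosSemidef) :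
    (fromBlocks (H₁ ⊙ H₂) (M₁ ⊙ M₂) (M₁ ⊙ M₂)ᴴ (H₁ ⊙ H₂)).PosSemidef := by
  rw [conjTranspose_hadamard, hadamard_comm M₂ᴴ, ← fromBlocks_hadamard_fromBlocks]
  exact h₁.hadamard h₂

variable [Fintype m]

lemma star_dotProduct_conjTranspose_mulVec (M : Matrix m m ℂ) (x y : m → ℂ) :
    star y ⬝ᵥ Mᴴ *ᵥ x = conj (star x ⬝ᵥ M *ᵥ y) := by
  rw [dotProduct_mulVec, ← star_mulVec, star_dotProduct]
  rfl

lemma star_smul_dotProduct_mulVec_smul (M : Matrix m m ℂ) (c d : ℂ) (x y : m → ℂ) :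
    star (c • x) ⬝ᵥ M *ᵥ (d • y) = conj c * d * (star x ⬝ᵥ M *ᵥ y) := by
  simp only [star_smul, mulVec_smul, dotProduct_smul, smul_dotProduct, smul_eq_mul]
  rw [Complex.star_def]
  ring

lemma IsHermitian.posSemidef_of_re_nonneg {H : Matrix m m ℂ} (hH : H.IsHermitian)
    (h : ∀ x, 0 ≤ (star x ⬝ᵥ H *ᵥ x).re) : H.PosSemidef :=
  .of_dotProduct_mulVec_nonneg hH fun x =>
    nonneg_iff.mpr ⟨h x, by simpa using (hH.im_star_dotProduct_mulVec_self x).symm⟩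

lemma re_star_dotProduct_fromBlocks_mulVec (H M : Matrix m m ℂ) (x y : m → ℂ) :
    (star (Sum.elim x y) ⬝ᵥ fromBlocks H M Mᴴ H *ᵥ Sum.elim x y).re =
      (star x ⬝ᵥ H *ᵥ x).re + (star y ⬝ᵥ H *ᵥ y).re + 2 * (star x ⬝ᵥ M *ᵥ y).re := by
  rw [fromBlocks_mulVec, Function.star_sumElim, sumElim_dotProduct_sumElim]
  simp only [Sum.elim_comp_inl, Sum.elim_comp_inr, dotProduct_add,
    star_dotProduct_conjTranspose_mulVec, add_re, conj_re]
  ring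

theorem fromBlocks_posSemidef_iff {H M : Matrix m m ℂ} (hH : H.IsHermitian) :
    (fromBlocks H M Mᴴ H).PosSemidef ↔
      ∀ x y, 2 * ‖star x ⬝ᵥ M *ᵥ y‖ ≤ (star x ⬝ᵥ H *ᵥ x).re + (star y ⬝ᵥ H *ᵥ y).re := by
  constructor
  · intro hpos x y
    obtain ⟨u, hu, hux⟩ := exists_norm_eq_mul_self (star x ⬝ᵥ M *ᵥ y)
    have hnonneg := hpos.re_dotProduct_nonneg (Sum.elim x (-u • y))
    have hy : star (-u • y) ⬝ᵥ H *ᵥ (-u • y) = star y ⬝ᵥ H *ᵥ y := by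
      rw [star_smul_dotProduct_mulVec_smul, map_neg, neg_mul_neg, conj_mul', hu]
      simp
    have hxy : star x ⬝ᵥ M *ᵥ (-u • y) = -‖star x ⬝ᵥ M *ᵥ y‖ := by
      rw [mulVec_smul, dotProduct_smul, smul_eq_mul, neg_mul, hux]
    rw [RCLike.re_to_complex, re_star_dotProduct_fromBlocks_mulVec, hy, hxy] at hnonneg
    simp only [neg_re, ofReal_re] at hnonneg
    linarith
  · intro h
    refine (hH.fromBlocks rfl hH).posSemidef_of_re_nonneg fun v => ?_
    rw [← Sum.elim_comp_inl_inr v, re_star_dotProduct_fromBlocks_mulVec]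
    set b := star (v ∘ Sum.inl) ⬝ᵥ M *ᵥ (v ∘ Sum.inr)
    linarith [h (v ∘ Sum.inl) (v ∘ Sum.inr), neg_abs_le b.re, abs_re_le_norm b]

theorem PosSemidef.two_mul_norm_star_dotProduct_mulVec_le {H : Matrix m m ℂ}
    (hH : H.PosSemidef) (x y : m → ℂ) :
    2 * ‖star x ⬝ᵥ H *ᵥ y‖ ≤ (star x ⬝ᵥ H *ᵥ x).re + (star y ⬝ᵥ H *ᵥ y).re := by
  classical
  have hblocks : fromBlocks H H Hᴴ H =
      (fromCols (1 : Matrix m m ℂ) 1)ᴴ * H * fromCols (1 : Matrix m m ℂ) 1 := by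
    rw [conjTranspose_fromCols_eq_fromRows_conjTranspose, conjTranspose_one, fromRows_mul,
      one_mul, fromRows_mul_fromCols, mul_one, hH.isHermitian.eq]
  refine (fromBlocks_posSemidef_iff hH.isHermitian).mp ?_ x y
  rw [hblocks]
  exact hH.conjTranspose_mul_mul_same _

end Matrix

lemma Real.cos_pos_of_mem_Ico {α : ℝ} (hα : α ∈ Set.Ico 0 (Real.pi / 2)) : 0 < Real.cos α :=
  Real.cos_pos_of_mem_Ioo ⟨by linarith [Real.pi_pos, hα.1], hα.2⟩

section NumericalRadius

variable {n : ℕ}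

lemma star_dotProduct_self_eq_norm_sq (v : Fin n → ℂ) :
    star v ⬝ᵥ v = ((‖WithLp.toLp 2 v‖ ^ 2 : ℝ) : ℂ) := by
  rw [dotProduct_comm, ← EuclideanSpace.inner_toLp_toLp, inner_self_eq_norm_sq_to_K]
  push_cast
  rfl

lemma star_dotProduct_mulVec_eq_inner (A : Matrix (Fin n) (Fin n) ℂ)
    (x : EuclideanSpace ℂ (Fin n)) :
    star (x : Fin n → ℂ) ⬝ᵥ A *ᵥ x = inner ℂ x (toEuclideanCLM (𝕜 := ℂ) A x) := by
  rw [EuclideanSpace.inner_eq_star_dotProduct, ofLp_toEuclideanCLM, dotProduct_comm]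

lemma norm_le_opNorm_of_mem_numRange {A : Matrix (Fin n) (Fin n) ℂ} {c : ℂ}
    (hc : c ∈ numRange A) : ‖c‖ ≤ opNorm A := by
  obtain ⟨x, hx, rfl⟩ := hc
  rw [star_dotProduct_mulVec_eq_inner]
  calc _ ≤ ‖x‖ * ‖toEuclideanCLM (𝕜 := ℂ) A x‖ := norm_inner_le_norm _ _
    _ ≤ ‖x‖ * (opNorm A * ‖x‖) := by gcongr; exact (toEuclideanCLM (𝕜 := ℂ) A).le_opNorm x
    _ = opNorm A := by rw [hx]; ring

lemma bddAbove_norm_numRange (A : Matrix (Fin n) (Fin n) ℂ) :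
    BddAbove ((‖·‖) '' numRange A) :=
  ⟨opNorm A, by rintro _ ⟨c, hc, rfl⟩; exact norm_le_opNorm_of_mem_numRange hc⟩

lemma norm_le_numRadius {A : Matrix (Fin n) (Fin n) ℂ} {c : ℂ} (hc : c ∈ numRange A) :
    ‖c‖ ≤ numRadius A :=
  le_csSup (bddAbove_norm_numRange A) ⟨c, hc, rfl⟩

lemma numRadius_nonneg (A : Matrix (Fin n) (Fin n) ℂ) : 0 ≤ numRadius A :=
  Real.sSup_nonneg (by rintro _ ⟨c, -, rfl⟩; exact norm_nonneg c)

lemma numRadius_le {A : Matrix (Fin n) (Fin n) ℂ} {r : ℝ} (hr : 0 ≤ r)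
    (h : ∀ c ∈ numRange A, ‖c‖ ≤ r) : numRadius A ≤ r :=
  Real.sSup_le (by rintro _ ⟨c, hc, rfl⟩; exact h c hc) hr

lemma numRange_smul (c : ℂ) (A : Matrix (Fin n) (Fin n) ℂ) :
    numRange (c • A) = c • numRange A := by
  ext a
  simp [numRange, Set.mem_smul_set, smul_mulVec, dotProduct_smul, eq_comm]

lemma numRadius_smul (c : ℂ) (A : Matrix (Fin n) (Fin n) ℂ) :
    numRadius (c • A) = ‖c‖ * numRadius A := by
  rw [numRadius, numRadius, ← smul_eq_mul, ← Real.sSup_smul_of_nonneg (norm_nonneg c),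
    numRange_smul, ← Set.image_smul, ← Set.image_smul, Set.image_image, Set.image_image]
  simp

lemma exists_mem_numRange_star_dotProduct_mulVec_eq (A : Matrix (Fin n) (Fin n) ℂ)
    {v : Fin n → ℂ} (hv : v ≠ 0) :
    ∃ c ∈ numRange A, star v ⬝ᵥ A *ᵥ v = ((‖WithLp.toLp 2 v‖ ^ 2 : ℝ) : ℂ) * c := by
  set r := ‖WithLp.toLp 2 v‖
  have hr : 0 < r := norm_pos_iff.mpr (by simpa using hv)
  refine ⟨_, ⟨((r⁻¹ : ℝ) : ℂ) • WithLp.toLp 2 v, ?_, rfl⟩, ?_⟩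
  · rw [norm_smul, norm_real, Real.norm_of_nonneg (inv_nonneg.mpr hr.le), inv_mul_cancel₀ hr.ne']
  · rw [WithLp.ofLp_smul, WithLp.ofLp_toLp, star_smul_dotProduct_mulVec_smul, conj_ofReal]
    push_cast
    field_simp

lemma norm_star_dotProduct_mulVec_le (A : Matrix (Fin n) (Fin n) ℂ) (v : Fin n → ℂ) :
    ‖star v ⬝ᵥ A *ᵥ v‖ ≤ numRadius A * ‖WithLp.toLp 2 v‖ ^ 2 := by
  rcases eq_or_ne v 0 with rfl | hv
  · simp
  obtain ⟨c, hc, hv⟩ := exists_mem_numRange_star_dotProduct_mulVec_eq A hv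
  rw [hv, norm_mul, norm_real, Real.norm_of_nonneg (by positivity), mul_comm]
  gcongr
  exact norm_le_numRadius hc

lemma re_nonneg_and_abs_im_le_of_numRange_subset_sector {α : ℝ}
    {A : Matrix (Fin n) (Fin n) ℂ} (hA : numRange A ⊆ sector α) (v : Fin n → ℂ) :
    0 ≤ (star v ⬝ᵥ A *ᵥ v).re ∧
      |(star v ⬝ᵥ A *ᵥ v).im| ≤ Real.tan α * (star v ⬝ᵥ A *ᵥ v).re := by
  rcases eq_or_ne v 0 with rfl | hv
  · simp
  obtain ⟨c, hc, hv⟩ := exists_mem_numRange_star_dotProduct_mulVec_eq A hv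
  obtain ⟨hre, him⟩ := hA hc
  rw [hv, re_ofReal_mul, im_ofReal_mul, abs_mul, abs_of_nonneg (by positivity)]
  constructor
  · positivity
  · rw [mul_left_comm]
    gcongr

lemma Matrix.IsHermitian.posSemidef_numRadius_smul_one_sub {P : Matrix (Fin n) (Fin n) ℂ}
    (hP : P.IsHermitian) : (((numRadius P : ℝ) : ℂ) • 1 - P).PosSemidef := by
  refine ((isHermitian_one.smul (conj_ofReal _)).sub hP).posSemidef_of_re_nonneg fun v => ?_
  rw [sub_mulVec, smul_mulVec, one_mulVec, dotProduct_sub, dotProduct_smul,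
    star_dotProduct_self_eq_norm_sq, smul_eq_mul, sub_re, ← ofReal_mul, ofReal_re, sub_nonneg]
  exact (re_le_norm _).trans (norm_star_dotProduct_mulVec_le P v)

lemma numRadius_le_of_posSemidef_sub {M : Matrix (Fin n) (Fin n) ℂ} {r : ℝ} (hr : 0 ≤ r)
    (hM : M.PosSemidef) (h : ((r : ℂ) • 1 - M).PosSemidef) : numRadius M ≤ r := by
  refine numRadius_le hr ?_
  rintro _ ⟨x, hx, rfl⟩
  have hle := h.dotProduct_mulVec_nonneg x
  rw [sub_mulVec, smul_mulVec, one_mulVec, dotProduct_sub, dotProduct_smul,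
    star_dotProduct_self_eq_norm_sq, WithLp.toLp_ofLp, hx, smul_eq_mul, sub_nonneg] at hle
  rw [← real_le_real, norm_of_nonneg' (hM.dotProduct_mulVec_nonneg x)]
  simpa using hle

theorem numRadius_hadamard_le_of_posSemidef {P Q : Matrix (Fin n) (Fin n) ℂ}
    (hP : P.PosSemidef) (hQ : Q.PosSemidef) :
    numRadius (P ⊙ Q) ≤ numRadius P * numRadius Q := by
  have hP' := hP.isHermitian.posSemidef_numRadius_smul_one_sub.hadamard hQ
  have hQ' := hQ.isHermitian.posSemidef_numRadius_smul_one_sub.hadamard PosSemidef.one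
  refine numRadius_le_of_posSemidef_sub (by positivity [numRadius_nonneg P, numRadius_nonneg Q])
    (hP.hadamard hQ) ?_
  have hsplit : ((numRadius P * numRadius Q : ℝ) : ℂ) • 1 - P ⊙ Q =
      ((numRadius P : ℂ) • 1 - P) ⊙ Q +
        (numRadius P : ℂ) • (((numRadius Q : ℂ) • 1 - Q) ⊙ 1) := by
    ext i j
    simp only [hadamard_apply, Matrix.sub_apply, Matrix.add_apply, Matrix.smul_apply, one_apply,
      smul_eq_mul]
    split_ifs <;> push_cast <;> ring
  rw [hsplit]
  exact hP'.add (hQ'.smul (zero_le_real.mpr (numRadius_nonneg P)))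

theorem numRadius_le_of_fromBlocks_posSemidef {H M : Matrix (Fin n) (Fin n) ℂ}
    (h : (fromBlocks H M Mᴴ H).PosSemidef) : numRadius M ≤ numRadius H := by
  refine numRadius_le (numRadius_nonneg H) ?_
  rintro _ ⟨x, hx, rfl⟩
  have hH := (isHermitian_fromBlocks_iff.mp h.isHermitian).1
  have hM := (fromBlocks_posSemidef_iff hH).mp h x x
  have hH_le := norm_le_numRadius (A := H) ⟨x, hx, rfl⟩
  linarith [re_le_norm (star (x : Fin n → ℂ) ⬝ᵥ H *ᵥ x)]

end NumericalRadius

section HermitianParts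

variable {n : ℕ}

lemma isHermitian_reM (A : Matrix (Fin n) (Fin n) ℂ) : (reM A).IsHermitian := by
  rw [reM, IsHermitian, conjTranspose_smul, conjTranspose_add, conjTranspose_conjTranspose,
    add_comm]
  norm_num

lemma isHermitian_imM (A : Matrix (Fin n) (Fin n) ℂ) : (imM A).IsHermitian := by
  rw [imM, IsHermitian, conjTranspose_smul, conjTranspose_sub, conjTranspose_conjTranspose,
    ← neg_sub, smul_neg, ← neg_smul]
  congr 1
  norm_num [Complex.ext_iff]

lemma reM_add_I_smul_imM (A : Matrix (Fin n) (Fin n) ℂ) : reM A + I • imM A = A := by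
  have hI : I * (-I / 2) = 1 / 2 := by ring_nf; rw [I_sq]; ring
  rw [reM, imM, smul_smul, hI]
  module

lemma star_dotProduct_reM_mulVec (A : Matrix (Fin n) (Fin n) ℂ) (x y : Fin n → ℂ) :
    star x ⬝ᵥ reM A *ᵥ y = (star x ⬝ᵥ A *ᵥ y + conj (star y ⬝ᵥ A *ᵥ x)) / 2 := by
  rw [reM, smul_mulVec, add_mulVec, dotProduct_smul, dotProduct_add,
    star_dotProduct_conjTranspose_mulVec, smul_eq_mul]
  ring

lemma star_dotProduct_reM_mulVec_self (A : Matrix (Fin n) (Fin n) ℂ) (v : Fin n → ℂ) :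
    star v ⬝ᵥ reM A *ᵥ v = (star v ⬝ᵥ A *ᵥ v).re := by
  rw [star_dotProduct_reM_mulVec, add_conj]
  push_cast
  ring

lemma star_dotProduct_imM_mulVec_self (A : Matrix (Fin n) (Fin n) ℂ) (v : Fin n → ℂ) :
    star v ⬝ᵥ imM A *ᵥ v = (star v ⬝ᵥ A *ᵥ v).im := by
  rw [imM, smul_mulVec, sub_mulVec, dotProduct_smul, dotProduct_sub,
    star_dotProduct_conjTranspose_mulVec, sub_conj, smul_eq_mul]
  push_cast
  ring_nf
  rw [I_sq]
  ring

lemma reM_posSemidef_of_re_nonneg {A : Matrix (Fin n) (Fin n) ℂ}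
    (h : ∀ v, 0 ≤ (star v ⬝ᵥ A *ᵥ v).re) : (reM A).PosSemidef :=
  (isHermitian_reM A).posSemidef_of_re_nonneg fun v => by
    simpa [star_dotProduct_reM_mulVec_self] using h v

lemma numRadius_reM_le (A : Matrix (Fin n) (Fin n) ℂ) : numRadius (reM A) ≤ numRadius A := by
  refine numRadius_le (numRadius_nonneg A) ?_
  rintro _ ⟨x, hx, rfl⟩
  rw [star_dotProduct_reM_mulVec_self, norm_real, Real.norm_eq_abs]
  exact (abs_re_le_norm _).trans (norm_le_numRadius ⟨x, hx, rfl⟩)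

end HermitianParts

section Sector

variable {n : ℕ} {A : Matrix (Fin n) (Fin n) ℂ}

lemma two_mul_norm_star_dotProduct_mulVec_le_of_im_eq_zero
    (hre : ∀ v, 0 ≤ (star v ⬝ᵥ A *ᵥ v).re) (him : ∀ v, (star v ⬝ᵥ A *ᵥ v).im = 0)
    (x y : Fin n → ℂ) :
    2 * ‖star x ⬝ᵥ A *ᵥ y‖ ≤ (star x ⬝ᵥ A *ᵥ x).re + (star y ⬝ᵥ A *ᵥ y).re := by
  have hR := (reM_posSemidef_of_re_nonneg hre).two_mul_norm_star_dotProduct_mulVec_le x y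
  have hK := ((isHermitian_imM A).posSemidef_of_re_nonneg fun v => by
    simp [star_dotProduct_imM_mulVec_self, him]).two_mul_norm_star_dotProduct_mulVec_le x y
  simp only [star_dotProduct_reM_mulVec_self, star_dotProduct_imM_mulVec_self, him, ofReal_re,
    add_zero] at hR hK
  have hK0 : star x ⬝ᵥ imM A *ᵥ y = 0 :=
    norm_eq_zero.mp (by linarith [norm_nonneg (star x ⬝ᵥ imM A *ᵥ y)])
  have hxy : star x ⬝ᵥ A *ᵥ y = star x ⬝ᵥ reM A *ᵥ y + I * star x ⬝ᵥ imM A *ᵥ y := by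
    conv_lhs => rw [← reM_add_I_smul_imM A]
    rw [add_mulVec, smul_mulVec, dotProduct_add, dotProduct_smul, smul_eq_mul]
  rwa [hxy, hK0, mul_zero, add_zero]

lemma two_mul_mul_norm_star_dotProduct_mulVec_le {s t : ℝ} (hs : 0 ≤ s) (ht : 0 ≤ t)
    (hst : s ^ 2 + t ^ 2 = 1)
    (hA : ∀ v, t * |(star v ⬝ᵥ A *ᵥ v).im| ≤ s * (star v ⬝ᵥ A *ᵥ v).re)
    (x y : Fin n → ℂ) :
    2 * s * t * ‖star x ⬝ᵥ A *ᵥ y‖ ≤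
      s * ((star x ⬝ᵥ A *ᵥ x).re + (star y ⬝ᵥ A *ᵥ y).re) := by
  set c : ℂ := s + t * I
  have hc : ‖c‖ = 1 := by rw [norm_add_mul_I, hst, Real.sqrt_one]
  have hrot : ∀ d : ℂ, d.re = s → |d.im| = t →
      2 * ‖star x ⬝ᵥ reM (d • A) *ᵥ y‖ ≤
        s * ((star x ⬝ᵥ A *ᵥ x).re + (star y ⬝ᵥ A *ᵥ y).re) -
          d.im * ((star x ⬝ᵥ A *ᵥ x).im + (star y ⬝ᵥ A *ᵥ y).im) := by
    intro d hre him
    have hre_nonneg : ∀ v, 0 ≤ (star v ⬝ᵥ (d • A) *ᵥ v).re := fun v => by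
      have := abs_mul d.im (star v ⬝ᵥ A *ᵥ v).im
      rw [him] at this
      rw [smul_mulVec, dotProduct_smul, smul_eq_mul, mul_re, hre]
      linarith [hA v, le_abs_self (d.im * (star v ⬝ᵥ A *ᵥ v).im)]
    have := (reM_posSemidef_of_re_nonneg hre_nonneg).two_mul_norm_star_dotProduct_mulVec_le x y
    simp only [star_dotProduct_reM_mulVec_self, ofReal_re, smul_mulVec, dotProduct_smul,
      smul_eq_mul, mul_re, hre] at this
    linarith
  have hP := hrot c (by simp [c]) (by simp [c, ht])
  have hM := hrot (conj c) (by simp [c]) (by simp [c, ht])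
  have hid : ((2 * s * t : ℝ) : ℂ) * star x ⬝ᵥ A *ᵥ y =
      -I * c * star x ⬝ᵥ reM (c • A) *ᵥ y + I * conj c * star x ⬝ᵥ reM (conj c • A) *ᵥ y := by
    simp only [star_dotProduct_reM_mulVec, smul_mulVec, dotProduct_smul, smul_eq_mul, map_mul,
      c, map_add, map_neg, conj_ofReal, conj_I]
    push_cast
    linear_combination (2 * s * t * star x ⬝ᵥ A *ᵥ y) * I_sq
  have hnorm : 2 * s * t * ‖star x ⬝ᵥ A *ᵥ y‖ ≤
      ‖star x ⬝ᵥ reM (c • A) *ᵥ y‖ + ‖star x ⬝ᵥ reM (conj c • A) *ᵥ y‖ := by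
    have := norm_add_le (-I * c * star x ⬝ᵥ reM (c • A) *ᵥ y)
      (I * conj c * star x ⬝ᵥ reM (conj c • A) *ᵥ y)
    rwa [← hid, norm_mul, norm_real, Real.norm_of_nonneg (by positivity), norm_mul, norm_mul,
      norm_mul, norm_mul, norm_neg, norm_I, RCLike.norm_conj, hc, one_mul, one_mul,
      one_mul] at this
  simp only [c, conj_im, add_im, ofReal_im, mul_im, ofReal_re, I_re, I_im] at hP hM
  linarith

theorem two_mul_cos_mul_norm_star_dotProduct_mulVec_le {α : ℝ}
    (hα : α ∈ Set.Ico 0 (Real.pi / 2)) (hA : numRange A ⊆ sector α) (x y : Fin n → ℂ) :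
    2 * Real.cos α * ‖star x ⬝ᵥ A *ᵥ y‖ ≤
      (star x ⬝ᵥ A *ᵥ x).re + (star y ⬝ᵥ A *ᵥ y).re := by
  have hsec := re_nonneg_and_abs_im_le_of_numRange_subset_sector hA
  have hcos := Real.cos_pos_of_mem_Ico hα
  have hsin : 0 ≤ Real.sin α :=
    Real.sin_nonneg_of_nonneg_of_le_pi hα.1 (by linarith [Real.pi_pos, hα.2])
  have hcos_im : ∀ v, Real.cos α * |(star v ⬝ᵥ A *ᵥ v).im| ≤
      Real.sin α * (star v ⬝ᵥ A *ᵥ v).re := fun v => by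
    have := (hsec v).2
    rw [Real.tan_eq_sin_div_cos, div_mul_eq_mul_div, le_div_iff₀ hcos] at this
    linarith
  rcases hsin.eq_or_lt with hsin0 | hsin0
  -- for `α = 0` the rotation argument degenerates, but then the quadratic form of `A` is real
  · have hcos1 : Real.cos α = 1 := by nlinarith [Real.sin_sq_add_cos_sq α]
    have him : ∀ v, (star v ⬝ᵥ A *ᵥ v).im = 0 := fun v => by
      have := hcos_im v
      rw [← hsin0, zero_mul] at this
      exact abs_nonpos_iff.mp (nonpos_of_mul_nonpos_right this hcos)
    rw [hcos1, mul_one]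
    exact two_mul_norm_star_dotProduct_mulVec_le_of_im_eq_zero (fun v => (hsec v).1) him x y
  · have := two_mul_mul_norm_star_dotProduct_mulVec_le hsin hcos.le
      (Real.sin_sq_add_cos_sq α) hcos_im x y
    exact le_of_mul_le_mul_left (by linarith) hsin0

lemma reM_posSemidef_of_numRange_subset_sector {α : ℝ} (hA : numRange A ⊆ sector α) :
    (reM A).PosSemidef :=
  reM_posSemidef_of_re_nonneg fun v => (re_nonneg_and_abs_im_le_of_numRange_subset_sector hA v).1

theorem fromBlocks_sec_smul_reM_posSemidef {α : ℝ} (hα : α ∈ Set.Ico 0 (Real.pi / 2))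
    (hA : numRange A ⊆ sector α) :
    (fromBlocks ((((Real.cos α)⁻¹ : ℝ) : ℂ) • reM A) A Aᴴ
      ((((Real.cos α)⁻¹ : ℝ) : ℂ) • reM A)).PosSemidef := by
  refine (fromBlocks_posSemidef_iff ((isHermitian_reM A).smul (conj_ofReal _))).mpr fun x y => ?_
  simp only [smul_mulVec, dotProduct_smul, star_dotProduct_reM_mulVec_self, smul_eq_mul,
    ← ofReal_mul, ofReal_re]
  have := two_mul_cos_mul_norm_star_dotProduct_mulVec_le hα hA x y
  rw [← mul_add, le_inv_mul_iff₀ (Real.cos_pos_of_mem_Ico hα)]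
  linarith

end Sector

theorem numRadius_hadamard_le_sec_sec {n : ℕ} (X Y : Matrix (Fin n) (Fin n) ℂ)
    (α₁ α₂ : ℝ) (hα₁ : α₁ ∈ Set.Ico 0 (Real.pi / 2)) (hα₂ : α₂ ∈ Set.Ico 0 (Real.pi / 2))
    (z w : ℂ) (hz : ‖z‖ = 1) (hw : ‖w‖ = 1)
    (hX : numRange (z • X) ⊆ sector α₁) (hY : numRange (w • Y) ⊆ sector α₂) :
    numRadius (X ⊙ Y) ≤ (Real.cos α₁)⁻¹ * (Real.cos α₂)⁻¹ * numRadius X * numRadius Y := by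
  set c₁ := (Real.cos α₁)⁻¹
  set c₂ := (Real.cos α₂)⁻¹
  have hc : 0 ≤ c₁ * c₂ := mul_nonneg (inv_nonneg.mpr (Real.cos_pos_of_mem_Ico hα₁).le)
    (inv_nonneg.mpr (Real.cos_pos_of_mem_Ico hα₂).le)
  have hreX : numRadius (reM (z • X)) ≤ numRadius X := by
    simpa [numRadius_smul, hz] using numRadius_reM_le (z • X)
  have hreY : numRadius (reM (w • Y)) ≤ numRadius Y := by
    simpa [numRadius_smul, hw] using numRadius_reM_le (w • Y)
  calc numRadius (X ⊙ Y) = numRadius ((z • X) ⊙ (w • Y)) := by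
        rw [smul_hadamard, hadamard_smul, numRadius_smul, numRadius_smul, hz, hw, one_mul, one_mul]
    _ ≤ numRadius (((c₁ : ℂ) • reM (z • X)) ⊙ ((c₂ : ℂ) • reM (w • Y))) :=
        numRadius_le_of_fromBlocks_posSemidef <|
          (fromBlocks_sec_smul_reM_posSemidef hα₁ hX).fromBlocks_hadamard
            (fromBlocks_sec_smul_reM_posSemidef hα₂ hY)
    _ = c₁ * c₂ * numRadius (reM (z • X) ⊙ reM (w • Y)) := by
        rw [smul_hadamard, hadamard_smul, smul_smul, numRadius_smul, ← ofReal_mul, norm_real,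
          Real.norm_of_nonneg hc]
    _ ≤ c₁ * c₂ * (numRadius X * numRadius Y) := by
        gcongr
        exact (numRadius_hadamard_le_of_posSemidef (reM_posSemidef_of_numRange_subset_sector hX)
          (reM_posSemidef_of_numRange_subset_sector hY)).trans
          (mul_le_mul hreX hreY (numRadius_nonneg _) (numRadius_nonneg X))
    _ = c₁ * c₂ * numRadius X * numRadius Y := by ring
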